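/- Let x ∈ F \ {0, 1, −1}. The centralizer in SO₄(F) of the element [(I₂, diag(x, x⁻¹))] is isomorphic as a group to GL₂(F). -/

import Mathlib

set_option linter.unusedSectionVars false

open Matrix

variable (F : Type*) [Field F] [Fintype F] [DecidableEq F]

/-- The group `GL_{2,2}(F)` of pairs of invertible 2×2 matrices with equal determinant. -/
def GL22 : Subgroup (GL (Fin 2) F × GL (Fin 2) F) where
  carrier := {p | Matrix.GeneralLinearGroup.det p.1 = Matrix.GeneralLinearGroup.det p.2}
  one_mem' := by simp
  mul_mem' := by
    intro a b ha hb
    simp only [Set.mem_setOf_eq, Prod.fst_mul, Prod.snd_mul, _root_.map_mul] at *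
    rw [ha, hb]
  inv_mem' := by
    intro a ha
    simp only [Set.mem_setOf_eq, Prod.fst_inv, Prod.snd_inv, map_inv] at *
    rw [ha]

/-- The scalar matrix `aI₂` as an element of `GL₂(F)`. -/
noncomputable def sc (a : Fˣ) : GL (Fin 2) F := Units.map (Matrix.scalar (Fin 2)).toMonoidHom a

lemma sc_pair_mem (a : Fˣ) : (sc F a, sc F a) ∈ GL22 F := rfl

/-- The central embedding `a ↦ (aI₂, aI₂)`. -/
noncomputable def scalarHom : Fˣ →* GL22 F where
  toFun a := ⟨(sc F a, sc F a), sc_pair_mem F a⟩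
  map_one' := by
    apply Subtype.ext
    apply Prod.ext <;> simp [sc]
  map_mul' a b := by
    apply Subtype.ext
    apply Prod.ext <;> simp [sc]

instance scalarHom_range_normal : (scalarHom F).range.Normal := by
  constructor
  rintro n ⟨a, rfl⟩ g
  refine ⟨a, ?_⟩
  have hc : g * scalarHom F a = scalarHom F a * g := by
    apply Subtype.ext
    apply Prod.ext <;>
    · apply Units.ext
      exact (Matrix.scalar_commute (a : F) (fun r => mul_comm _ _) _).symm
  rw [hc, mul_assoc, mul_inv_cancel, mul_one]

/-- `SO₄(F)` as the quotient of `GL_{2,2}(F)` by the diagonally embedded scalars. -/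
abbrev SO4 := GL22 F ⧸ (scalarHom F).range

/-- The class `[(g,h)]` of a pair in `SO₄(F)`. -/
noncomputable def cls : GL22 F → SO4 F := QuotientGroup.mk


-- AUX START
lemma sc_val (a : Fˣ) : ((sc F a : GL (Fin 2) F) : Matrix (Fin 2) (Fin 2) F)
    = Matrix.scalar (Fin 2) (a : F) := rfl

lemma sc_comm (a : Fˣ) (m : GL (Fin 2) F) : sc F a * m = m * sc F a := by
  apply Units.ext
  rw [Units.val_mul, Units.val_mul, sc_val]
  exact Matrix.scalar_commute (a : F) (fun r => mul_comm _ _) m.val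

/-- The preimage in GL22 of the centralizer of `cls p`. -/
noncomputable def Kc (p : GL22 F) : Subgroup (GL22 F) :=
  (Subgroup.centralizer {cls F p}).comap (QuotientGroup.mk' (scalarHom F).range)

lemma mem_Kc_iff (x : F) (p : GL22 F)
    (hp1 : (p.val.1 : Matrix (Fin 2) (Fin 2) F) = 1)
    (hp2 : (p.val.2 : Matrix (Fin 2) (Fin 2) F) = Matrix.diagonal ![x, x⁻¹])
    (k : GL22 F) :
    k ∈ Kc F p ↔ (k.val.2 : Matrix (Fin 2) (Fin 2) F) * Matrix.diagonal ![x, x⁻¹]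
      = Matrix.diagonal ![x, x⁻¹] * (k.val.2 : Matrix (Fin 2) (Fin 2) F) := by
  rw [Kc, Subgroup.mem_comap, Subgroup.mem_centralizer_singleton_iff]
  show cls F k * cls F p = cls F p * cls F k ↔ _
  constructor
  · intro hcomm
    have hcomm' : ((k * p : GL22 F) : SO4 F) = ((p * k : GL22 F) : SO4 F) := hcomm
    obtain ⟨a, ha⟩ := QuotientGroup.eq.mp hcomm' 
    have hkey : k * p * scalarHom F a = p * k := by rw [ha]; group
    -- first component: extract a = 1
    have h1 : ((k.val.1 * p.val.1 * (sc F a) : GL (Fin 2) F) : Matrix (Fin 2) (Fin 2) F)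
        = ((p.val.1 * k.val.1 : GL (Fin 2) F) : Matrix (Fin 2) (Fin 2) F) := by
      have := congrArg (fun z : GL22 F => ((z.val.1 : GL (Fin 2) F) : Matrix (Fin 2) (Fin 2) F)) hkey
      exact this
    have ha1 : a = 1 := by
      simp only [Units.val_mul, hp1, one_mul, mul_one] at h1
      have h2 : ((k.val.1)⁻¹ : GL (Fin 2) F).val * ((k.val.1 : GL (Fin 2) F).val
          * (sc F a : GL (Fin 2) F).val) = ((k.val.1)⁻¹ : GL (Fin 2) F).val * (k.val.1 : GL (Fin 2) F).val := by
        rw [h1]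
      rw [← mul_assoc, ← Units.val_mul, ← Units.val_mul, inv_mul_cancel] at h2
      have h3 : (sc F a : GL (Fin 2) F).val = (1 : Matrix (Fin 2) (Fin 2) F) := by
        simpa using h2
      rw [sc_val] at h3
      have := congrFun (congrFun h3 0) 0
      simp [Matrix.scalar_apply] at this
      exact this
    rw [ha1, _root_.map_one, mul_one] at hkey
    have := congrArg (fun z : GL22 F => ((z.val.2 : GL (Fin 2) F) : Matrix (Fin 2) (Fin 2) F)) hkey
    simpa [hp2] using this
  · intro hcomm
    have hpk : k * p = p * k := by
      apply Subtype.ext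
      apply Prod.ext
      · apply Units.ext
        show ((k.val.1 : GL (Fin 2) F) * p.val.1).val = ((p.val.1 : GL (Fin 2) F) * k.val.1).val
        rw [Units.val_mul, Units.val_mul, hp1, one_mul, mul_one]
      · apply Units.ext
        show ((k.val.2 : GL (Fin 2) F) * p.val.2).val = ((p.val.2 : GL (Fin 2) F) * k.val.2).val
        rw [Units.val_mul, Units.val_mul, hp2]
        exact hcomm
    show ((k * p : GL22 F) : SO4 F) = ((p * k : GL22 F) : SO4 F)
    rw [hpk]

lemma x_ne_inv (x : F) (hx0 : x ≠ 0) (hx1 : x ≠ 1) (hx2 : x ≠ -1) : x ≠ x⁻¹ := by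
  intro h
  have hsq : x * x = 1 := by field_simp at h; linear_combination h
  have : (x - 1) * (x + 1) = 0 := by linear_combination hsq
  rcases mul_eq_zero.mp this with h' | h'
  · exact hx1 (by linear_combination h')
  · exact hx2 (by linear_combination h')

lemma offdiag_of_comm (x : F) (hne : x ≠ x⁻¹) (h : Matrix (Fin 2) (Fin 2) F)
    (hc : h * Matrix.diagonal ![x, x⁻¹] = Matrix.diagonal ![x, x⁻¹] * h) :
    h 0 1 = 0 ∧ h 1 0 = 0 := by
  have h01 := congrFun (congrFun hc 0) 1
  have h10 := congrFun (congrFun hc 1) 0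
  rw [Matrix.mul_diagonal, Matrix.diagonal_mul] at h01 h10
  simp only [Matrix.cons_val_zero, Matrix.cons_val_one, Matrix.head_cons] at h01 h10
  constructor
  · have : h 0 1 * (x⁻¹ - x) = 0 := by linear_combination h01
    exact (mul_eq_zero.mp this).resolve_right (sub_ne_zero.mpr (Ne.symm hne))
  · have : h 1 0 * (x - x⁻¹) = 0 := by linear_combination h10
    exact (mul_eq_zero.mp this).resolve_right (sub_ne_zero.mpr hne)

lemma det_ne_zero' (m : GL (Fin 2) F) : ((m : Matrix (Fin 2) (Fin 2) F)).det ≠ 0 := by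
  have : IsUnit (m : Matrix (Fin 2) (Fin 2) F) := m.isUnit
  rw [Matrix.isUnit_iff_isUnit_det] at this
  exact this.ne_zero

lemma h00_ne_zero (m : GL (Fin 2) F) (h01 : (m : Matrix (Fin 2) (Fin 2) F) 0 1 = 0) :
    (m : Matrix (Fin 2) (Fin 2) F) 0 0 ≠ 0 := by
  have hd := det_ne_zero' F m
  rw [Matrix.det_fin_two, h01] at hd
  intro h0
  rw [h0] at hd
  simp at hd

lemma h11_eq (m : GL (Fin 2) F) (h01 : (m : Matrix (Fin 2) (Fin 2) F) 0 1 = 0) :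
    ((m : Matrix (Fin 2) (Fin 2) F)).det
      = (m : Matrix (Fin 2) (Fin 2) F) 0 0 * (m : Matrix (Fin 2) (Fin 2) F) 1 1 := by
  rw [Matrix.det_fin_two, h01]; ring

lemma sc_mul (u v : Fˣ) : sc F (u * v) = sc F u * sc F v := by
  simp [sc]

lemma sc_key (u v : Fˣ) (g g' : GL (Fin 2) F) :
    (sc F u * sc F v)⁻¹ * (g * g') = ((sc F u)⁻¹ * g) * ((sc F v)⁻¹ * g') := by
  have hvg : g * (sc F v)⁻¹ = (sc F v)⁻¹ * g :=
    (Commute.inv_left (sc_comm F v g) : _).symm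
  have huv : sc F u * sc F v = sc F v * sc F u := sc_comm F u (sc F v)
  calc (sc F u * sc F v)⁻¹ * (g * g')
      = (sc F v * sc F u)⁻¹ * (g * g') := by rw [← huv]
    _ = (sc F u)⁻¹ * ((sc F v)⁻¹ * g) * g' := by rw [_root_.mul_inv_rev]; group
    _ = (sc F u)⁻¹ * (g * (sc F v)⁻¹) * g' := by rw [hvg]
    _ = ((sc F u)⁻¹ * g) * ((sc F v)⁻¹ * g') := by group

lemma Kc_offdiag (x : F) (hx : x ≠ x⁻¹) (p : GL22 F)
    (hp1 : (p.val.1 : Matrix (Fin 2) (Fin 2) F) = 1)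
    (hp2 : (p.val.2 : Matrix (Fin 2) (Fin 2) F) = Matrix.diagonal ![x, x⁻¹])
    (k : GL22 F) (hk : k ∈ Kc F p) :
    (k.val.2 : Matrix (Fin 2) (Fin 2) F) 0 1 = 0
      ∧ (k.val.2 : Matrix (Fin 2) (Fin 2) F) 1 0 = 0 :=
  offdiag_of_comm F x hx _ ((mem_Kc_iff F x p hp1 hp2 k).mp hk)

/-- The homomorphism `Kc → GL₂`, `(g, diag(s,t)) ↦ s⁻¹ g`. -/
noncomputable def Psi (x : F) (hx : x ≠ x⁻¹) (p : GL22 F)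
    (hp1 : (p.val.1 : Matrix (Fin 2) (Fin 2) F) = 1)
    (hp2 : (p.val.2 : Matrix (Fin 2) (Fin 2) F) = Matrix.diagonal ![x, x⁻¹]) :
    Kc F p →* GL (Fin 2) F where
  toFun k := (sc F (Units.mk0 ((k.1.val.2 : Matrix (Fin 2) (Fin 2) F) 0 0)
      (h00_ne_zero F k.1.val.2 (Kc_offdiag F x hx p hp1 hp2 k.1 k.2).1)))⁻¹ * k.1.val.1
  map_one' := by
    have h2 : Units.mk0 (((1 : Kc F p).1.val.2 : Matrix (Fin 2) (Fin 2) F) 0 0)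
        (h00_ne_zero F (1 : Kc F p).1.val.2
          (Kc_offdiag F x hx p hp1 hp2 (1 : Kc F p).1 (1 : Kc F p).2).1) = 1 :=
      Units.ext (by simp)
    rw [h2]
    simp [sc]
  map_mul' k k' := by
    have hs : ((((k * k' : Kc F p)).1.val.2 : Matrix (Fin 2) (Fin 2) F) 0 0)
        = ((k.1.val.2 : Matrix (Fin 2) (Fin 2) F) 0 0)
          * ((k'.1.val.2 : Matrix (Fin 2) (Fin 2) F) 0 0) := by
      have : (((k * k' : Kc F p)).1.val.2 : Matrix (Fin 2) (Fin 2) F)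
          = (k.1.val.2 : Matrix (Fin 2) (Fin 2) F) * (k'.1.val.2 : Matrix (Fin 2) (Fin 2) F) := rfl
      rw [this, Matrix.mul_apply, Fin.sum_univ_two,
        (Kc_offdiag F x hx p hp1 hp2 k.1 k.2).1]
      ring
    have h2 : Units.mk0 ((((k * k' : Kc F p)).1.val.2 : Matrix (Fin 2) (Fin 2) F) 0 0)
        (h00_ne_zero F ((k * k' : Kc F p)).1.val.2
          (Kc_offdiag F x hx p hp1 hp2 ((k * k' : Kc F p)).1 ((k * k' : Kc F p)).2).1)
        = Units.mk0 ((k.1.val.2 : Matrix (Fin 2) (Fin 2) F) 0 0)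
            (h00_ne_zero F k.1.val.2 (Kc_offdiag F x hx p hp1 hp2 k.1 k.2).1)
          * Units.mk0 ((k'.1.val.2 : Matrix (Fin 2) (Fin 2) F) 0 0)
            (h00_ne_zero F k'.1.val.2 (Kc_offdiag F x hx p hp1 hp2 k'.1 k'.2).1) :=
      Units.ext (by simpa using hs)
    have hg : ((k * k' : Kc F p)).1.val.1 = k.1.val.1 * k'.1.val.1 := rfl
    rw [h2, hg, sc_mul, sc_key]

/-- The restriction of the quotient map to `Kc`, landing in the centralizer. -/
noncomputable def Phi (p : GL22 F) : Kc F p →* Subgroup.centralizer {cls F p} :=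
  ((QuotientGroup.mk' (scalarHom F).range).domRestrict (Kc F p)).codRestrict _ (fun k => k.2)

lemma Phi_surjective (p : GL22 F) : Function.Surjective (Phi F p) := by
  rintro ⟨c, hc⟩
  obtain ⟨k, hk⟩ := QuotientGroup.mk'_surjective (scalarHom F).range c
  refine ⟨⟨k, ?_⟩, ?_⟩
  · show QuotientGroup.mk' (scalarHom F).range k ∈ Subgroup.centralizer {cls F p}
    rw [hk]; exact hc
  · exact Subtype.ext hk

lemma Phi_ker_iff (p : GL22 F) (k : Kc F p) :
    Phi F p k = 1 ↔ k.1 ∈ (scalarHom F).range := by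
  constructor
  · intro h
    have : QuotientGroup.mk' (scalarHom F).range k.1 = 1 := congrArg Subtype.val h
    exact (QuotientGroup.eq_one_iff k.1).mp this
  · intro h
    refine Subtype.ext ?_
    exact (QuotientGroup.eq_one_iff k.1).mpr h

lemma Psi_ker_iff (x : F) (hx : x ≠ x⁻¹) (p : GL22 F)
    (hp1 : (p.val.1 : Matrix (Fin 2) (Fin 2) F) = 1)
    (hp2 : (p.val.2 : Matrix (Fin 2) (Fin 2) F) = Matrix.diagonal ![x, x⁻¹])
    (k : Kc F p) :
    Psi F x hx p hp1 hp2 k = 1 ↔ k.1 ∈ (scalarHom F).range := by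
  set u : Fˣ := Units.mk0 ((k.1.val.2 : Matrix (Fin 2) (Fin 2) F) 0 0)
      (h00_ne_zero F k.1.val.2 (Kc_offdiag F x hx p hp1 hp2 k.1 k.2).1) with hu
  have hPsi : Psi F x hx p hp1 hp2 k = (sc F u)⁻¹ * k.1.val.1 := rfl
  constructor
  · intro h
    rw [hPsi, inv_mul_eq_one] at h
    -- h : sc F u = k.1.val.1
    refine ⟨u, ?_⟩
    -- need to show k.1 = (sc F u, sc F u)
    have hoff := Kc_offdiag F x hx p hp1 hp2 k.1 k.2
    -- determinant condition:
    have hdet : ((k.1.val.1 : GL (Fin 2) F) : Matrix (Fin 2) (Fin 2) F).det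
        = ((k.1.val.2 : GL (Fin 2) F) : Matrix (Fin 2) (Fin 2) F).det := by
      have := k.1.2
      simp only [GL22, Subgroup.mem_mk, Set.mem_setOf_eq] at this
      have := congrArg (Units.val) this
      simpa [Matrix.GeneralLinearGroup.val_det_apply] using this
    have hg : ((k.1.val.1 : GL (Fin 2) F) : Matrix (Fin 2) (Fin 2) F)
        = Matrix.scalar (Fin 2) (u : F) := by rw [← h]; rfl
    have hdetg : ((k.1.val.1 : GL (Fin 2) F) : Matrix (Fin 2) (Fin 2) F).det
        = (u : F) * (u : F) := by
      rw [hg]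
      simp [Matrix.scalar_apply, Matrix.det_fin_two, Matrix.diagonal_apply]
      ring
    have h00 : (u : F) = ((k.1.val.2 : GL (Fin 2) F) : Matrix (Fin 2) (Fin 2) F) 0 0 := rfl
    have h11 : ((k.1.val.2 : GL (Fin 2) F) : Matrix (Fin 2) (Fin 2) F) 1 1 = (u : F) := by
      have hdeth := h11_eq F k.1.val.2 hoff.1
      rw [hdeth, ← h00] at hdet
      rw [hdetg] at hdet
      exact mul_left_cancel₀ u.ne_zero hdet.symm
    have hh : ((k.1.val.2 : GL (Fin 2) F) : Matrix (Fin 2) (Fin 2) F)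
        = Matrix.scalar (Fin 2) (u : F) := by
      ext i j
      fin_cases i <;> fin_cases j <;>
        simp [Matrix.scalar_apply, Matrix.diagonal_apply, hoff.1, hoff.2, h11, ← h00]
    symm
    apply Subtype.ext
    apply Prod.ext
    · exact Units.ext hg
    · exact Units.ext hh
  · rintro ⟨a, ha⟩
    have hg : k.1.val.1 = sc F a := by rw [← ha]; rfl
    have hh : k.1.val.2 = sc F a := by rw [← ha]; rfl
    have hua : u = a := by
      apply Units.ext
      show ((k.1.val.2 : GL (Fin 2) F) : Matrix (Fin 2) (Fin 2) F) 0 0 = (a : F)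
      rw [hh, sc_val]
      simp [Matrix.scalar_apply]
    rw [hPsi, hua, hg, inv_mul_cancel]

lemma Psi_apply (x : F) (hx : x ≠ x⁻¹) (p : GL22 F)
    (hp1 : (p.val.1 : Matrix (Fin 2) (Fin 2) F) = 1)
    (hp2 : (p.val.2 : Matrix (Fin 2) (Fin 2) F) = Matrix.diagonal ![x, x⁻¹])
    (k : Kc F p) (a : Fˣ) (ha : (k.1.val.2 : Matrix (Fin 2) (Fin 2) F) 0 0 = (a : F)) :
    Psi F x hx p hp1 hp2 k = (sc F a)⁻¹ * k.1.val.1 := by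
  have hPsi : Psi F x hx p hp1 hp2 k = (sc F (Units.mk0 ((k.1.val.2 : Matrix (Fin 2) (Fin 2) F) 0 0)
      (h00_ne_zero F k.1.val.2 (Kc_offdiag F x hx p hp1 hp2 k.1 k.2).1)))⁻¹ * k.1.val.1 := rfl
  rw [hPsi, show Units.mk0 ((k.1.val.2 : Matrix (Fin 2) (Fin 2) F) 0 0)
      (h00_ne_zero F k.1.val.2 (Kc_offdiag F x hx p hp1 hp2 k.1 k.2).1) = a from Units.ext ha]

lemma Psi_surjective (x : F) (hx : x ≠ x⁻¹) (p : GL22 F)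
    (hp1 : (p.val.1 : Matrix (Fin 2) (Fin 2) F) = 1)
    (hp2 : (p.val.2 : Matrix (Fin 2) (Fin 2) F) = Matrix.diagonal ![x, x⁻¹]) :
    Function.Surjective (Psi F x hx p hp1 hp2) := by
  intro m
  set dm : F := ((m : Matrix (Fin 2) (Fin 2) F)).det with hdm
  have hdm0 : dm ≠ 0 := det_ne_zero' F m
  have hdet : (Matrix.diagonal ![(1 : F), dm]).det = dm := by
    rw [Matrix.det_diagonal, Fin.prod_univ_two]; simp
  set D : GL (Fin 2) F := Matrix.GeneralLinearGroup.mkOfDetNeZero (Matrix.diagonal ![1, dm])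
    (by rw [hdet]; exact hdm0) with hD
  have hDcoe : (D : Matrix (Fin 2) (Fin 2) F) = Matrix.diagonal ![1, dm] := rfl
  have hmem : (m, D) ∈ GL22 F := by
    show Matrix.GeneralLinearGroup.det m = Matrix.GeneralLinearGroup.det D
    apply Units.ext
    rw [Matrix.GeneralLinearGroup.val_det_apply, Matrix.GeneralLinearGroup.val_det_apply,
      hDcoe, hdet]
  set K : GL22 F := ⟨(m, D), hmem⟩ with hKdef
  have hK : K ∈ Kc F p := by
    rw [mem_Kc_iff F x p hp1 hp2]
    show (D : Matrix (Fin 2) (Fin 2) F) * Matrix.diagonal ![x, x⁻¹]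
        = Matrix.diagonal ![x, x⁻¹] * (D : Matrix (Fin 2) (Fin 2) F)
    rw [hDcoe, Matrix.diagonal_mul_diagonal, Matrix.diagonal_mul_diagonal]
    exact congrArg Matrix.diagonal (by funext i; exact mul_comm _ _)
  refine ⟨⟨K, hK⟩, ?_⟩
  have h00 : ((⟨K, hK⟩ : Kc F p).1.val.2 : Matrix (Fin 2) (Fin 2) F) 0 0 = ((1 : Fˣ) : F) := by
    show (D : Matrix (Fin 2) (Fin 2) F) 0 0 = 1
    rw [hDcoe]
    simp
  rw [Psi_apply F x hx p hp1 hp2 ⟨K, hK⟩ 1 h00]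
  show (sc F 1)⁻¹ * m = m
  simp [sc]

/-- For `x ∉ {0,1,-1}`, the centralizer in `SO₄(F)` of `[(I₂, diag(x,x⁻¹))]` is isomorphic
to `GL₂(F)`. -/
theorem centralizer_c1c3_iso (hq : Odd (Fintype.card F)) (x : F)
    (hx0 : x ≠ 0) (hx1 : x ≠ 1) (hx2 : x ≠ -1)
    (p : GL22 F)
    (hp1 : (p.val.1 : Matrix (Fin 2) (Fin 2) F) = 1)
    (hp2 : (p.val.2 : Matrix (Fin 2) (Fin 2) F) = Matrix.diagonal ![x, x⁻¹]) :
    Nonempty (↥(Subgroup.centralizer {cls F p}) ≃* GL (Fin 2) F) := by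
  have hx : x ≠ x⁻¹ := x_ne_inv F x hx0 hx1 hx2
  have hker : (Phi F p).ker = (Psi F x hx p hp1 hp2).ker := by
    ext k
    rw [MonoidHom.mem_ker, MonoidHom.mem_ker, Phi_ker_iff F p k,
      Psi_ker_iff F x hx p hp1 hp2 k]
  exact ⟨((QuotientGroup.quotientKerEquivOfSurjective _ (Phi_surjective F p)).symm.trans
    (QuotientGroup.quotientMulEquivOfEq hker)).trans
    (QuotientGroup.quotientKerEquivOfSurjective _ (Psi_surjective F x hx p hp1 hp2))⟩
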